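/- Let G be any Σ-system over Σ = {◆, ■} whose production rules are all of the form ◆ ⟶ ■ⁿ◆ᵏ or ■ ⟶ ■ᵏ◆ⁿ (closed under this pairing). Let L = L_{S4 ∪ G}(a) be the language derivable from a character a ∈ Σ in the union of S4 = {◆ ⟶ ε, ■ ⟶ ε, ◆ ⟶ ◆◆, ■ ⟶ ■■} with G. Then either L = L_{S4}(a) or L = L_{S5}(a), where S5 = {◆ ⟶ ε, ■ ⟶ ε, ◆ ⟶ ■◆, ■ ⟶ ■◆}. -/

import Mathlib

/-!
If `G` contains a rule `◆ ⟶ ■ⁿ⁺¹◆ᵏ`, it also contains its partner `■ ⟶ ■ᵏ◆ⁿ⁺¹`. With the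
erasing rules of `S4`, each character then derives the other by erasing all but one letter of
such a right-hand side, and with duplication every string becomes derivable from every
character. The same happens in `S5`, whose right-hand sides `■◆` contain both characters.
Otherwise every rule of `G` has the form `c ⟶ cᵏ`, which `S4` already derives.
-/

/-- The two-character alphabet Σ = {◆, ■}. -/
inductive Ch : Type
  | fd  -- ◆
  | bd  -- ■
deriving DecidableEq

/-- A Σ-system is a set of production rules `a ⟶ r`. -/
abbrev SigmaSystem : Type := Set (Ch × List Ch)

/-- One-step derivation. -/
def Step (S : SigmaSystem) (x y : List Ch) : Prop :=
  ∃ (s' t' : List Ch) (a : Ch) (r : List Ch),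
    (a, r) ∈ S ∧ x = s' ++ [a] ++ t' ∧ y = s' ++ r ++ t'

/-- The derivation relation: reflexive-transitive closure of one-step derivation. -/
def Derives (S : SigmaSystem) : List Ch → List Ch → Prop :=
  Relation.ReflTransGen (Step S)

/-- The Σ-system S4 = {◆ ⟶ ε, ■ ⟶ ε, ◆ ⟶ ◆◆, ■ ⟶ ■■}. -/
def S4 : SigmaSystem :=
  {(Ch.fd, []), (Ch.bd, []), (Ch.fd, [Ch.fd, Ch.fd]), (Ch.bd, [Ch.bd, Ch.bd])}

/-- The Σ-system S5 = {◆ ⟶ ε, ■ ⟶ ε, ◆ ⟶ ■◆, ■ ⟶ ■◆}. -/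
def S5 : SigmaSystem :=
  {(Ch.fd, []), (Ch.bd, []), (Ch.fd, [Ch.bd, Ch.fd]), (Ch.bd, [Ch.bd, Ch.fd])}

lemma Step.mono {S T : SigmaSystem} (h : S ⊆ T) {x y : List Ch} (hs : Step S x y) :
    Step T x y := by
  obtain ⟨s', t', a, r, hm, hx, hy⟩ := hs
  exact ⟨s', t', a, r, h hm, hx, hy⟩

lemma Step.context {S : SigmaSystem} (l r : List Ch) {x y : List Ch} (h : Step S x y) :
    Step S (l ++ x ++ r) (l ++ y ++ r) := by
  obtain ⟨s', t', a, rr, hm, rfl, rfl⟩ := h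
  exact ⟨l ++ s', t' ++ r, a, rr, hm, by simp, by simp⟩

namespace Derives

variable {S T : SigmaSystem} {x y x' y' : List Ch}

lemma mono (h : S ⊆ T) (hd : Derives S x y) : Derives T x y :=
  Relation.ReflTransGen.mono (fun _ _ => Step.mono h) _ _ hd

lemma of_mem {a : Ch} {r : List Ch} (h : (a, r) ∈ S) : Derives S [a] r :=
  Relation.ReflTransGen.single ⟨[], [], a, r, h, by simp, by simp⟩

lemma context (l r : List Ch) (h : Derives S x y) : Derives S (l ++ x ++ r) (l ++ y ++ r) :=
  Relation.ReflTransGen.lift (fun z => l ++ z ++ r) (fun _ _ => Step.context l r) _ _ h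

lemma append (h₁ : Derives S x x') (h₂ : Derives S y y') : Derives S (x ++ y) (x' ++ y') := by
  have h₁' : Derives S (x ++ y) (x' ++ y) := by simpa using h₁.context [] y
  have h₂' : Derives S (x' ++ y) (x' ++ y') := by simpa using h₂.context x' []
  exact Relation.ReflTransGen.trans h₁' h₂'

lemma of_sublist (herase : ∀ c : Ch, (c, []) ∈ S) (h : List.Sublist y x) : Derives S x y := by
  induction h with
  | slnil => exact Relation.ReflTransGen.refl
  | cons c _ ih => simpa using append (of_mem (herase c)) ih
  | cons_cons c _ ih => exact append (x := [c]) Relation.ReflTransGen.refl ih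

lemma of_rules (hrules : ∀ p ∈ T, Derives S [p.1] p.2) (h : Derives T x y) : Derives S x y := by
  induction h with
  | refl => exact Relation.ReflTransGen.refl
  | tail _ hstep ih =>
    obtain ⟨s', t', a, r, hm, rfl, rfl⟩ := hstep
    exact Relation.ReflTransGen.trans ih ((hrules _ hm).context s' t')

end Derives

lemma derives_singleton_of_mem {S : SigmaSystem} (herase : ∀ c : Ch, (c, []) ∈ S)
    {c d : Ch} {r : List Ch} (hcr : (c, r) ∈ S) (hd : d ∈ r) : Derives S [c] [d] :=
  Relation.ReflTransGen.trans (Derives.of_mem hcr)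
    (Derives.of_sublist herase (List.singleton_sublist.mpr hd))

lemma derives_of_rename_of_dup {S : SigmaSystem} (herase : ∀ c : Ch, (c, []) ∈ S)
    (hrename : ∀ c d : Ch, Derives S [c] [d]) (hdup : ∀ c : Ch, Derives S [c] [c, c])
    (a : Ch) (t : List Ch) : Derives S [a] t := by
  induction t generalizing a with
  | nil => exact Derives.of_mem (herase a)
  | cons d t ih =>
    exact Relation.ReflTransGen.trans (hdup a) (Derives.append (x := [a]) (hrename a d) (ih a))

lemma S4_erase (c : Ch) : (c, []) ∈ S4 := by
  cases c <;> simp [S4]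

lemma S5_erase (c : Ch) : (c, []) ∈ S5 := by
  cases c <;> simp [S5]

lemma derives_replicate_S4 (c : Ch) (k : ℕ) : Derives S4 [c] (List.replicate k c) := by
  have hdup : (c, [c, c]) ∈ S4 := by cases c <;> simp [S4]
  induction k with
  | zero => exact Derives.of_mem (S4_erase c)
  | succ k ih =>
    exact Relation.ReflTransGen.trans (Derives.of_mem hdup)
      (Derives.append (x := [c]) Relation.ReflTransGen.refl ih)

lemma derives_S5 (a : Ch) (t : List Ch) : Derives S5 [a] t := by
  have hrule (c : Ch) : (c, [Ch.bd, Ch.fd]) ∈ S5 := by cases c <;> simp [S5]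
  have hrename (c d : Ch) : Derives S5 [c] [d] :=
    derives_singleton_of_mem S5_erase (hrule c) (by cases d <;> simp)
  refine derives_of_rename_of_dup S5_erase hrename (fun c => ?_) a t
  exact Relation.ReflTransGen.trans (Derives.of_mem (hrule c))
    (Derives.append (x := [Ch.bd]) (hrename _ c) (hrename _ c))

lemma derives_S4_union_of_mixed_rules {G : SigmaSystem} {n k : ℕ}
    (hfd : (Ch.fd, List.replicate (n + 1) Ch.bd ++ List.replicate k Ch.fd) ∈ G)
    (hbd : (Ch.bd, List.replicate k Ch.bd ++ List.replicate (n + 1) Ch.fd) ∈ G)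
    (a : Ch) (t : List Ch) : Derives (S4 ∪ G) [a] t := by
  have herase (c : Ch) : (c, []) ∈ S4 ∪ G := Or.inl (S4_erase c)
  have hrename (c d : Ch) : Derives (S4 ∪ G) [c] [d] := by
    cases c <;> cases d
    · exact Relation.ReflTransGen.refl
    · exact derives_singleton_of_mem herase (Or.inr hfd) (by simp)
    · exact derives_singleton_of_mem herase (Or.inr hbd) (by simp)
    · exact Relation.ReflTransGen.refl
  exact derives_of_rename_of_dup herase hrename
    (fun c => (derives_replicate_S4 c 2).mono Set.subset_union_left) a t

lemma derives_S4_of_derives_S4_union {G : SigmaSystem}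
    (hG : ∀ p ∈ G, ∃ k : ℕ, p = (p.1, List.replicate k p.1)) {x y : List Ch}
    (h : Derives (S4 ∪ G) x y) : Derives S4 x y := by
  refine Derives.of_rules (fun p hp => ?_) h
  rcases hp with hp | hp
  · exact Derives.of_mem hp
  · obtain ⟨k, hk⟩ := hG p hp
    rw [hk]
    exact derives_replicate_S4 p.1 k

lemma paired_rules_dichotomy {G : SigmaSystem}
    (hshape : ∀ p ∈ G, ∃ n k : ℕ,
      p = (Ch.fd, List.replicate n Ch.bd ++ List.replicate k Ch.fd) ∨
      p = (Ch.bd, List.replicate k Ch.bd ++ List.replicate n Ch.fd))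
    (hpair : ∀ n k : ℕ,
      (Ch.fd, List.replicate n Ch.bd ++ List.replicate k Ch.fd) ∈ G ↔
      (Ch.bd, List.replicate k Ch.bd ++ List.replicate n Ch.fd) ∈ G) :
    (∀ p ∈ G, ∃ k : ℕ, p = (p.1, List.replicate k p.1)) ∨
    ∃ n k : ℕ, (Ch.fd, List.replicate (n + 1) Ch.bd ++ List.replicate k Ch.fd) ∈ G ∧
      (Ch.bd, List.replicate k Ch.bd ++ List.replicate (n + 1) Ch.fd) ∈ G := by
  by_cases hmixed : ∃ n k : ℕ,
      (Ch.fd, List.replicate (n + 1) Ch.bd ++ List.replicate k Ch.fd) ∈ G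
  · obtain ⟨n, k, hfd⟩ := hmixed
    exact Or.inr ⟨n, k, hfd, (hpair _ _).mp hfd⟩
  · refine Or.inl fun p hp => ?_
    obtain ⟨n, k, rfl | rfl⟩ := hshape p hp
    · cases n with
      | zero => exact ⟨k, by simp⟩
      | succ n => exact absurd ⟨n, k, hp⟩ hmixed
    · cases n with
      | zero => exact ⟨k, by simp⟩
      | succ n => exact absurd ⟨n, k, (hpair _ _).mpr hp⟩ hmixed

/-- For any Σ-system G whose rules are of the forms ◆ ⟶ ■ⁿ◆ᵏ and ■ ⟶ ■ᵏ◆ⁿ and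
closed under this pairing, the language of S4 ∪ G from a character `a` is either
the language of S4 from `a` or the language of S5 from `a`. -/
theorem language_S4_union_G (G : SigmaSystem)
    (hshape : ∀ p ∈ G, ∃ n k : ℕ,
      p = (Ch.fd, List.replicate n Ch.bd ++ List.replicate k Ch.fd) ∨
      p = (Ch.bd, List.replicate k Ch.bd ++ List.replicate n Ch.fd))
    (hpair : ∀ n k : ℕ,
      (Ch.fd, List.replicate n Ch.bd ++ List.replicate k Ch.fd) ∈ G ↔
      (Ch.bd, List.replicate k Ch.bd ++ List.replicate n Ch.fd) ∈ G)
    (a : Ch) :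
    {t : List Ch | Derives (S4 ∪ G) [a] t} = {t : List Ch | Derives S4 [a] t} ∨
    {t : List Ch | Derives (S4 ∪ G) [a] t} = {t : List Ch | Derives S5 [a] t} := by
  rcases paired_rules_dichotomy hshape hpair with hmono | ⟨n, k, hfd, hbd⟩
  · exact Or.inl <| Set.ext fun t =>
      ⟨derives_S4_of_derives_S4_union hmono, Derives.mono Set.subset_union_left⟩
  · exact Or.inr <| Set.ext fun t =>
      iff_of_true (derives_S4_union_of_mixed_rules hfd hbd a t) (derives_S5 a t)
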